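/- arXiv:2312.07421 — 6 statements merged into one kernel-verified Lean document; each statement's English description precedes it below -/
import Mathlib

section
/- Let π : Fin N → Fin n be a surjective map encoding a partition with matrices L and L̄, and let A ∈ ℝ^{N×N}. Then the partition is a control equivalence for A (i.e., L·A = L·A·L̄·L) if and only if for every block index i ∈ Fin n and all nodes j, j' ∈ Fin N with π j = π j', the block column sums agree: Σ_{r : π r = i} A r j = Σ_{r : π r = i} A r j'. -/
open Matrix

/-- Aggregation matrix of the partition encoded by `π`. -/
noncomputable def aggL {N n : ℕ} (π : Fin N → Fin n) : Matrix (Fin n) (Fin N) ℝ :=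
  fun i j => if π j = i then 1 else 0

/-- Averaging matrix of the partition encoded by `π`. -/
noncomputable def avgL {N n : ℕ} (π : Fin N → Fin n) : Matrix (Fin N) (Fin n) ℝ :=
  fun j i => if π j = i then
    (1 : ℝ) / (Finset.univ.filter (fun j' : Fin N => π j' = i)).card else 0

/-! Row `i` of `L * A` is the sum of the rows of `A` in block `i`, and `B * L̄ * L` replaces
each entry of `B` by the average of its row over the block of its column. Hence
`L A = (L A) L̄ L` says exactly that every row of `L A` is constant on blocks. -/

section Partition

variable {N n : ℕ} (π : Fin N → Fin n)

lemma aggL_mul_apply {m : Type*} [Fintype m] (M : Matrix (Fin N) m ℝ) (i : Fin n) (k : m) :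
    (aggL π * M) i k = ∑ r ∈ Finset.univ.filter (fun r : Fin N => π r = i), M r k := by
  simp only [mul_apply, aggL, ite_mul, one_mul, zero_mul, Finset.sum_ite, Finset.sum_const_zero,
    add_zero]

lemma mul_avgL_mul_aggL_apply {l : Type*} (B : Matrix l (Fin N) ℝ) (i : l) (j : Fin N) :
    (B * avgL π * aggL π) i j =
      ((Finset.univ.filter (fun j' : Fin N => π j' = π j)).card : ℝ)⁻¹ *
        ∑ j' ∈ Finset.univ.filter (fun j' : Fin N => π j' = π j), B i j' := by
  simp only [mul_apply, aggL, mul_ite, mul_one, mul_zero, Finset.sum_ite_eq, Finset.mem_univ,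
    if_true, avgL, one_div, Finset.mul_sum, Finset.sum_filter]
  refine Finset.sum_congr rfl fun j' _ => ?_
  split_ifs <;> ring

lemma eq_mul_avgL_mul_aggL_iff {l : Type*} (B : Matrix l (Fin N) ℝ) :
    B = B * avgL π * aggL π ↔ ∀ (i : l) (j j' : Fin N), π j = π j' → B i j = B i j' := by
  simp only [← Matrix.ext_iff, mul_avgL_mul_aggL_apply]
  constructor
  · intro h i j j' hjj'
    rw [h i j, h i j', hjj']
  · intro h i j
    set block := Finset.univ.filter (fun j' : Fin N => π j' = π j)
    have hconst : ∀ j' ∈ block, B i j' = B i j := fun j' hj' =>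
      h i j' j (Finset.mem_filter.mp hj').2
    have hcard : (block.card : ℝ) ≠ 0 :=
      Nat.cast_ne_zero.mpr (Finset.card_ne_zero_of_mem (Finset.mem_filter.mpr ⟨by simp, rfl⟩))
    rw [Finset.sum_congr rfl hconst, Finset.sum_const, nsmul_eq_mul, inv_mul_cancel_left₀ hcard]

end Partition

theorem controlEquivalence_iff_blockColumnSums_general {N n : ℕ} (π : Fin N → Fin n)
    (A : Matrix (Fin N) (Fin N) ℝ) :
    aggL π * A = aggL π * A * avgL π * aggL π ↔
      ∀ (i : Fin n) (j j' : Fin N), π j = π j' →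
        ∑ r ∈ Finset.univ.filter (fun r : Fin N => π r = i), A r j =
          ∑ r ∈ Finset.univ.filter (fun r : Fin N => π r = i), A r j' := by
  simp only [eq_mul_avgL_mul_aggL_iff, aggL_mul_apply]

/-- The partition encoded by `π` is a control equivalence for `A` iff, for every block
`i` and all nodes `j, j'` in a common block, the block column sums agree. -/
theorem controlEquivalence_iff_blockColumnSums {N n : ℕ} (π : Fin N → Fin n)
    (hπ : Function.Surjective π) (A : Matrix (Fin N) (Fin N) ℝ) :
    aggL π * A = aggL π * A * avgL π * aggL π ↔
      ∀ (i : Fin n) (j j' : Fin N), π j = π j' →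
        ∑ r ∈ Finset.univ.filter (fun r : Fin N => π r = i), A r j =
          ∑ r ∈ Finset.univ.filter (fun r : Fin N => π r = i), A r j' :=
  controlEquivalence_iff_blockColumnSums_general π A
end

section
/- (Theorem 1, part 1.) Let the partition encoded by π with matrices L, L̄ be a control equivalence for A ∈ ℝ^{N×N}, let B have unit-vector columns given by an injective driver map d, and let F, R be final and running costs that are constant on the partition, with induced reduced costs F̂, R̂. Then for every admissible pair (u,x) from x0 ∈ ℝ^N, the pair (û, ẑ) with û(t) = (L·B)·u(t) and ẑ(t) = L·x(t) is a reduced admissible pair from L·x0, and J_u(x0,T) = Ĵ_û(L·x0,T) for every T ≥ 0. -/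
/-!
`L` is a linear map and the integrand `A x + B u` is integrable (the control is bounded), so `L`
passes under the integral, and the control-equivalence identity `L A = L A L̄ L` turns
`L (A x + B u)` into `Â (L x) + (L B) u`. As the columns of `B` are unit vectors,
`((L B) u)_i` is the sum of the controls acting on block `i`, whence the reduced box bounds.
The costs agree because `F` and `R` factor through `L`.
-/

open Matrix MeasureTheory

section IntervalIntegral

variable {ι κ : Type*} [Fintype ι] [Fintype κ]

theorem Matrix.mulVec_intervalIntegral (L : Matrix κ ι ℝ) {f : ℝ → ι → ℝ} {a b : ℝ}
    (hf : IntervalIntegrable f volume a b) :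
    L *ᵥ ∫ s in a..b, f s = ∫ s in a..b, L *ᵥ f s :=
  ((mulVecLin L).toContinuousLinearMap.intervalIntegral_comp_comm hf).symm

theorem IntervalIntegrable.matrix_mulVec (L : Matrix κ ι ℝ) {f : ℝ → ι → ℝ} {a b : ℝ}
    (hf : IntervalIntegrable f volume a b) :
    IntervalIntegrable (fun s => L *ᵥ f s) volume a b := by
  rw [intervalIntegrable_iff] at hf ⊢
  exact (mulVecLin L).toContinuousLinearMap.integrable_comp hf

theorem intervalIntegrable_of_forall_mem_Icc {u : ℝ → ι → ℝ} {m M : ι → ℝ} (hu : Measurable u)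
    (hbox : ∀ t, u t ∈ Set.Icc m M) (a b : ℝ) : IntervalIntegrable u volume a b := by
  obtain ⟨C, hC⟩ := (Metric.isBounded_Icc m M).exists_norm_le
  rw [intervalIntegrable_iff]
  exact Measure.integrableOn_of_bounded measure_Ioc_lt_top.ne hu.aestronglyMeasurable
    (M := C) (ae_of_all _ fun t => hC _ (hbox t))

end IntervalIntegral

theorem Matrix.mulVec_mulVec_add_mulVec_of_mul_eq {R ι κ μ : Type*} [CommSemiring R]
    [Fintype ι] [Fintype κ] [Fintype μ] {L : Matrix κ ι R} {A : Matrix ι ι R} {Lbar : Matrix ι κ R}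
    (hCE : L * A = L * A * Lbar * L) (B : Matrix ι μ R) (y : ι → R) (v : μ → R) :
    L *ᵥ (A *ᵥ y + B *ᵥ v) = (L * A * Lbar) *ᵥ (L *ᵥ y) + (L * B) *ᵥ v := by
  rw [mulVec_add, mulVec_mulVec, mulVec_mulVec, mulVec_mulVec, ← hCE]

theorem aggL_mul_mulVec_apply {N n K : ℕ} (π : Fin N → Fin n) (d : Fin K → Fin N)
    {B : Matrix (Fin N) (Fin K) ℝ} (hB : ∀ j l, B j l = if j = d l then 1 else 0)
    (v : Fin K → ℝ) (i : Fin n) :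
    ((aggL π * B) *ᵥ v) i = ∑ l ∈ Finset.univ.filter (fun l => π (d l) = i), v l := by
  simp [mulVec, dotProduct, Matrix.mul_apply, aggL, hB, Finset.sum_filter]

theorem optimality_preservation_part1_general {N n K : ℕ} (π : Fin N → Fin n)
    (A : Matrix (Fin N) (Fin N) ℝ)
    (hCE : aggL π * A = aggL π * A * avgL π * aggL π)
    (d : Fin K → Fin N)
    (B : Matrix (Fin N) (Fin K) ℝ)
    (hB : ∀ (j : Fin N) (l : Fin K), B j l = if j = d l then 1 else 0)
    (m M : Fin K → ℝ)
    (F : (Fin N → ℝ) → ℝ) (R : ℝ → (Fin N → ℝ) → (Fin K → ℝ) → ℝ)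
    (Fhat : (Fin n → ℝ) → ℝ) (Rhat : ℝ → (Fin n → ℝ) → (Fin n → ℝ) → ℝ)
    (hFhat : ∀ x : Fin N → ℝ, F x = Fhat ((aggL π).mulVec x))
    (hRhat : ∀ (t : ℝ) (x : Fin N → ℝ) (v : Fin K → ℝ),
      R t x v = Rhat t ((aggL π).mulVec x) ((aggL π * B).mulVec v))
    (x0 : Fin N → ℝ) (u : ℝ → Fin K → ℝ) (x : ℝ → Fin N → ℝ)
    (hu : Measurable u) (hbox : ∀ t : ℝ, ∀ l : Fin K, m l ≤ u t l ∧ u t l ≤ M l)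
    (hx : Continuous x)
    (hxeq : ∀ t : ℝ, 0 ≤ t →
      x t = x0 + ∫ s in (0:ℝ)..t, (A.mulVec (x s) + B.mulVec (u s))) :
    -- the macro-input is measurable
    Measurable (fun t : ℝ => (aggL π * B).mulVec (u t)) ∧
    -- the macro-input lies in the reduced box `[m̂;M̂]`
    (∀ t : ℝ, ∀ i : Fin n,
      (∑ l ∈ Finset.univ.filter (fun l : Fin K => π (d l) = i), m l) ≤
          (aggL π * B).mulVec (u t) i ∧
        (aggL π * B).mulVec (u t) i ≤
          ∑ l ∈ Finset.univ.filter (fun l : Fin K => π (d l) = i), M l) ∧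
    -- the lumped trajectory is continuous
    Continuous (fun t : ℝ => (aggL π).mulVec (x t)) ∧
    -- the lumped trajectory solves the reduced integral equation from `L·x0`
    (∀ t : ℝ, 0 ≤ t →
      (aggL π).mulVec (x t) = (aggL π).mulVec x0 +
        ∫ s in (0:ℝ)..t,
          ((aggL π * A * avgL π).mulVec ((aggL π).mulVec (x s)) +
            (aggL π * B).mulVec (u s))) ∧
    -- the cost is preserved at every horizon
    (∀ T : ℝ, 0 ≤ T →
      F (x T) + (∫ t in (0:ℝ)..T, R t (x t) (u t)) =
        Fhat ((aggL π).mulVec (x T)) +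
          ∫ t in (0:ℝ)..T,
            Rhat t ((aggL π).mulVec (x t)) ((aggL π * B).mulVec (u t))) := by
  refine ⟨(continuous_const.matrix_mulVec continuous_id).measurable.comp hu, fun t i => ?_,
    continuous_const.matrix_mulVec hx, fun t ht => ?_, fun T _ => by simp only [hFhat, hRhat]⟩
  · rw [aggL_mul_mulVec_apply π d hB]
    exact ⟨Finset.sum_le_sum fun l _ => (hbox t l).1, Finset.sum_le_sum fun l _ => (hbox t l).2⟩
  · have hf : IntervalIntegrable (fun s => A *ᵥ x s + B *ᵥ u s) volume 0 t :=
      ((continuous_const.matrix_mulVec hx).intervalIntegrable 0 t).add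
        ((intervalIntegrable_of_forall_mem_Icc hu
          (fun s => ⟨fun l => (hbox s l).1, fun l => (hbox s l).2⟩) 0 t).matrix_mulVec B)
    rw [hxeq t ht, mulVec_add, mulVec_intervalIntegral _ hf]
    simp only [mulVec_mulVec_add_mulVec_of_mul_eq hCE]

/-- Theorem 1, part 1: given a control equivalence and costs constant on the partition,
every admissible pair `(u, x)` from `x0` is lumped to a reduced admissible pair
`(û, ẑ) = ((L·B)·u, L·x)` from `L·x0` with the same cost at every horizon `T ≥ 0`. -/
theorem optimality_preservation_part1 {N n K : ℕ} (π : Fin N → Fin n)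
    (hπ : Function.Surjective π) (A : Matrix (Fin N) (Fin N) ℝ)
    (hCE : aggL π * A = aggL π * A * avgL π * aggL π)
    (d : Fin K → Fin N) (hd : Function.Injective d)
    (B : Matrix (Fin N) (Fin K) ℝ)
    (hB : ∀ (j : Fin N) (l : Fin K), B j l = if j = d l then 1 else 0)
    (m M : Fin K → ℝ) (hmM : ∀ l, m l ≤ M l)
    (F : (Fin N → ℝ) → ℝ) (R : ℝ → (Fin N → ℝ) → (Fin K → ℝ) → ℝ)
    (Fhat : (Fin n → ℝ) → ℝ) (Rhat : ℝ → (Fin n → ℝ) → (Fin n → ℝ) → ℝ)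
    (hFhat : ∀ x : Fin N → ℝ, F x = Fhat ((aggL π).mulVec x))
    (hRhat : ∀ (t : ℝ) (x : Fin N → ℝ) (v : Fin K → ℝ),
      R t x v = Rhat t ((aggL π).mulVec x) ((aggL π * B).mulVec v))
    (x0 : Fin N → ℝ) (u : ℝ → Fin K → ℝ) (x : ℝ → Fin N → ℝ)
    (hu : Measurable u) (hbox : ∀ t : ℝ, ∀ l : Fin K, m l ≤ u t l ∧ u t l ≤ M l)
    (hx : Continuous x)
    (hxeq : ∀ t : ℝ, 0 ≤ t →
      x t = x0 + ∫ s in (0:ℝ)..t, (A.mulVec (x s) + B.mulVec (u s))) :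
    -- the macro-input is measurable
    Measurable (fun t : ℝ => (aggL π * B).mulVec (u t)) ∧
    -- the macro-input lies in the reduced box `[m̂;M̂]`
    (∀ t : ℝ, ∀ i : Fin n,
      (∑ l ∈ Finset.univ.filter (fun l : Fin K => π (d l) = i), m l) ≤
          (aggL π * B).mulVec (u t) i ∧
        (aggL π * B).mulVec (u t) i ≤
          ∑ l ∈ Finset.univ.filter (fun l : Fin K => π (d l) = i), M l) ∧
    -- the lumped trajectory is continuous
    Continuous (fun t : ℝ => (aggL π).mulVec (x t)) ∧
    -- the lumped trajectory solves the reduced integral equation from `L·x0`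
    (∀ t : ℝ, 0 ≤ t →
      (aggL π).mulVec (x t) = (aggL π).mulVec x0 +
        ∫ s in (0:ℝ)..t,
          ((aggL π * A * avgL π).mulVec ((aggL π).mulVec (x s)) +
            (aggL π * B).mulVec (u s))) ∧
    -- the cost is preserved at every horizon
    (∀ T : ℝ, 0 ≤ T →
      F (x T) + (∫ t in (0:ℝ)..T, R t (x t) (u t)) =
        Fhat ((aggL π).mulVec (x T)) +
          ∫ t in (0:ℝ)..T,
            Rhat t ((aggL π).mulVec (x t)) ((aggL π * B).mulVec (u t))) :=
  optimality_preservation_part1_general π A hCE d B hB m M F R Fhat Rhat hFhat hRhat x0 u x hu hbox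
    hx hxeq
end

section
/- (Trajectory matching under disaggregated controls.) Let the partition encoded by π with matrices L, L̄ be a control equivalence for A ∈ ℝ^{N×N} (L·A = L·A·L̄·L), let B ∈ ℝ^{N×K}, and set Â = L·A·L̄. Let u : ℝ → ℝ^K be measurable and bounded, let x : ℝ → ℝ^N be continuous with x(t) = x0 + ∫₀ᵗ (A·x(s) + B·u(s)) ds for all t ≥ 0, and let ẑ : ℝ → ℝ^n be continuous with ẑ(t) = L·x0 + ∫₀ᵗ (Â·ẑ(s) + û(s)) ds for all t ≥ 0, where û : ℝ → ℝ^n is measurable with û(t) = (L·B)·u(t) for all t. Then ẑ(t) = L·x(t) for all t ≥ 0. -/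
/-!
Control equivalence says `L A = Â L` with `Â = L A L̄`, so applying `L` to the integral equation
of `x` shows that the lumped trajectory `L x` solves the reduced integral equation driven by
`û = (L B) u`, from the same initial value `L x0` as `ẑ`. Continuous solutions of a linear
integral equation `z t = z₀ + ∫₀ᵗ (M z + f)` are unique: the difference `w` of two of them satisfies
`w t = ∫₀ᵗ M w`, hence is a `C¹` solution of `w' = M w` with `w 0 = 0`, and vanishes by
Gronwall-type uniqueness for Lipschitz ODEs.
-/

open Matrix MeasureTheory Set intervalIntegral

section IntegralEquation

variable {E F : Type*} [NormedAddCommGroup E] [NormedAddCommGroup F]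

theorem IntervalIntegrable.of_bounded {u : ℝ → E} (hu : AEStronglyMeasurable u volume) {C : ℝ}
    (hC : ∀ t, ‖u t‖ ≤ C) (a b : ℝ) : IntervalIntegrable u volume a b :=
  intervalIntegrable_iff.2 <| IntegrableOn.of_bound measure_Ioc_lt_top hu.restrict C
    (ae_of_all _ hC)

variable [NormedSpace ℝ E] [NormedSpace ℝ F]

theorem ContinuousLinearMap.intervalIntegrable_comp (M : E →L[ℝ] F) {f : ℝ → E} {a b : ℝ}
    (hf : IntervalIntegrable f volume a b) : IntervalIntegrable (fun s => M (f s)) volume a b :=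
  ⟨M.integrable_comp hf.1, M.integrable_comp hf.2⟩

variable [CompleteSpace E]

theorem eq_zero_of_forall_eq_integral_clm (M : E →L[ℝ] E) {w : ℝ → E} (hw : Continuous w)
    (hw_eq : ∀ t, 0 ≤ t → w t = ∫ s in (0:ℝ)..t, M (w s)) {t : ℝ} (ht : 0 ≤ t) : w t = 0 := by
  have hderiv : ∀ s ∈ Ico 0 t, HasDerivWithinAt w (M (w s)) (Ici s) s := fun s hs =>
    ((M.continuous.comp hw).integral_hasStrictDerivAt 0 s).hasDerivAt.hasDerivWithinAt.congr
      (fun r hr => hw_eq r (hs.1.trans hr)) (hw_eq s hs.1)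
  refine ODE_solution_unique (v := fun _ => M) (fun _ => M.lipschitz) hw.continuousOn hderiv
    continuousOn_const (fun s _ => ?_) (by simp [hw_eq 0 le_rfl]) ⟨ht, le_rfl⟩
  simpa using hasDerivWithinAt_const s (Ici s) (0 : E)

theorem eq_of_forall_eq_integral_clm_add (M : E →L[ℝ] E) {f : ℝ → E}
    (hf : ∀ t, IntervalIntegrable f volume 0 t) {z₀ : E} {z₁ z₂ : ℝ → E}
    (hz₁ : Continuous z₁) (hz₂ : Continuous z₂)
    (h₁ : ∀ t, 0 ≤ t → z₁ t = z₀ + ∫ s in (0:ℝ)..t, (M (z₁ s) + f s))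
    (h₂ : ∀ t, 0 ≤ t → z₂ t = z₀ + ∫ s in (0:ℝ)..t, (M (z₂ s) + f s)) {t : ℝ} (ht : 0 ≤ t) :
    z₁ t = z₂ t := by
  have hint : ∀ z : ℝ → E, Continuous z → ∀ t,
      IntervalIntegrable (fun s => M (z s) + f s) volume 0 t := fun z hz t =>
    ((M.continuous.comp hz).intervalIntegrable 0 t).add (hf t)
  refine sub_eq_zero.1 <| eq_zero_of_forall_eq_integral_clm M (hz₁.sub hz₂) (fun t ht => ?_) ht
  rw [Pi.sub_apply, h₁ t ht, h₂ t ht, add_sub_add_left_eq_sub,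
    ← integral_sub (hint z₁ hz₁ t) (hint z₂ hz₂ t)]
  simp only [Pi.sub_apply, map_sub, add_sub_add_right_eq_sub]

theorem ContinuousLinearMap.map_eq_add_integral [CompleteSpace F] (M : E →L[ℝ] F) {g : ℝ → E}
    {y₀ : E} {y : ℝ → E} {t : ℝ} (hg : IntervalIntegrable g volume 0 t)
    (hy : y t = y₀ + ∫ s in (0:ℝ)..t, g s) :
    M (y t) = M y₀ + ∫ s in (0:ℝ)..t, M (g s) := by
  rw [hy, map_add, M.intervalIntegral_comp_comm hg]

end IntegralEquation

theorem Matrix.mulVec_add_mulVec_of_mul_eq_mul {ι κ μ ν R : Type*} [Fintype κ] [Fintype μ]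
    [Fintype ν] [CommRing R] {L : Matrix ι κ R} {A : Matrix κ κ R} {Â : Matrix ι μ R}
    {P : Matrix μ κ R} (h : L * A = Â * P) (B : Matrix κ ν R) (v : κ → R) (w : ν → R) :
    L *ᵥ (A *ᵥ v + B *ᵥ w) = Â *ᵥ (P *ᵥ v) + (L * B) *ᵥ w := by
  rw [mulVec_add, mulVec_mulVec, mulVec_mulVec, h, mulVec_mulVec]

theorem trajectory_matching_general {N n K : ℕ} (π : Fin N → Fin n)
    (A : Matrix (Fin N) (Fin N) ℝ)
    (hCE : aggL π * A = aggL π * A * avgL π * aggL π)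
    (B : Matrix (Fin N) (Fin K) ℝ)
    (u : ℝ → Fin K → ℝ) (hu : Measurable u) (hubd : ∃ C : ℝ, ∀ t : ℝ, ‖u t‖ ≤ C)
    (x0 : Fin N → ℝ) (x : ℝ → Fin N → ℝ) (hx : Continuous x)
    (hxeq : ∀ t : ℝ, 0 ≤ t →
      x t = x0 + ∫ s in (0:ℝ)..t, (A.mulVec (x s) + B.mulVec (u s)))
    (uhat : ℝ → Fin n → ℝ)
    (huhat_eq : ∀ t : ℝ, uhat t = (aggL π * B).mulVec (u t))
    (zhat : ℝ → Fin n → ℝ) (hzhat : Continuous zhat)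
    (hzhateq : ∀ t : ℝ, 0 ≤ t →
      zhat t = (aggL π).mulVec x0 +
        ∫ s in (0:ℝ)..t, ((aggL π * A * avgL π).mulVec (zhat s) + uhat s)) :
    ∀ t : ℝ, 0 ≤ t → zhat t = (aggL π).mulVec (x t) := by
  obtain ⟨C, hC⟩ := hubd
  let clm {m k : ℕ} (M : Matrix (Fin m) (Fin k) ℝ) := (Matrix.mulVecLin M).toContinuousLinearMap
  have hclm {m k : ℕ} (M : Matrix (Fin m) (Fin k) ℝ) (v : Fin k → ℝ) : clm M v = M *ᵥ v := rfl
  have hBu : ∀ t, IntervalIntegrable (fun s => B *ᵥ u s) volume 0 t := fun t =>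
    (clm B).intervalIntegrable_comp (.of_bounded hu.aestronglyMeasurable hC 0 t)
  have huhat_int : ∀ t, IntervalIntegrable uhat volume 0 t := by
    simp only [funext huhat_eq, ← mulVec_mulVec]
    exact fun t => (clm (aggL π)).intervalIntegrable_comp (hBu t)
  have hLx : ∀ t, 0 ≤ t → aggL π *ᵥ x t = aggL π *ᵥ x0 +
      ∫ s in (0:ℝ)..t, ((aggL π * A * avgL π) *ᵥ (aggL π *ᵥ x s) + uhat s) := fun t ht => by
    have hAxBu := ((clm A).continuous.comp hx |>.intervalIntegrable 0 t).add (hBu t)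
    simpa only [hclm, Function.comp_apply, huhat_eq, mulVec_add_mulVec_of_mul_eq_mul hCE] using
      (clm (aggL π)).map_eq_add_integral hAxBu (hxeq t ht)
  exact fun t ht => eq_of_forall_eq_integral_clm_add (clm (aggL π * A * avgL π)) huhat_int
    hzhat ((clm (aggL π)).continuous.comp hx) hzhateq hLx ht

/-- Trajectory matching under disaggregated controls: if the partition is a control
equivalence for `A`, then any solution `ẑ` of the reduced integral equation driven by
the aggregated input `û = (L·B)·u`, starting from `L·x0`, coincides with the lumped
original trajectory `L·x`. -/
theorem trajectory_matching {N n K : ℕ} (π : Fin N → Fin n)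
    (hπ : Function.Surjective π) (A : Matrix (Fin N) (Fin N) ℝ)
    (hCE : aggL π * A = aggL π * A * avgL π * aggL π)
    (B : Matrix (Fin N) (Fin K) ℝ)
    (u : ℝ → Fin K → ℝ) (hu : Measurable u) (hubd : ∃ C : ℝ, ∀ t : ℝ, ‖u t‖ ≤ C)
    (x0 : Fin N → ℝ) (x : ℝ → Fin N → ℝ) (hx : Continuous x)
    (hxeq : ∀ t : ℝ, 0 ≤ t →
      x t = x0 + ∫ s in (0:ℝ)..t, (A.mulVec (x s) + B.mulVec (u s)))
    (uhat : ℝ → Fin n → ℝ) (huhat : Measurable uhat)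
    (huhat_eq : ∀ t : ℝ, uhat t = (aggL π * B).mulVec (u t))
    (zhat : ℝ → Fin n → ℝ) (hzhat : Continuous zhat)
    (hzhateq : ∀ t : ℝ, 0 ≤ t →
      zhat t = (aggL π).mulVec x0 +
        ∫ s in (0:ℝ)..t, ((aggL π * A * avgL π).mulVec (zhat s) + uhat s)) :
    ∀ t : ℝ, 0 ≤ t → zhat t = (aggL π).mulVec (x t) :=
  trajectory_matching_general π A hCE B u hu hubd x0 x hx hxeq uhat huhat_eq zhat hzhat hzhateq
end

section
/- (Theorem 2, forward direction for suprema.) Let the partition encoded by π with matrices L, L̄ be a control equivalence for A ∈ ℝ^{N×N}, let B have unit-vector columns given by an injective driver map d, let m ≤ M componentwise, and let F, R be costs constant on the partition with induced reduced costs F̂, R̂. Then for every x0 ∈ ℝ^N and every T ≥ 0, V^sup(x0,T) = V̂^sup(L·x0,T). -/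
open Matrix MeasureTheory

/-- Reduced bound `m̂ i = Σ_{l : π(d l) = i} m l`. -/
noncomputable def redBound {N n K : ℕ} (π : Fin N → Fin n) (d : Fin K → Fin N)
    (m : Fin K → ℝ) : Fin n → ℝ :=
  fun i => ∑ l ∈ Finset.univ.filter (fun l : Fin K => π (d l) = i), m l

/-- The set of cost values `J_u(x0, T)` attained by admissible pairs `(u, x)` from `x0`
(with integrable running cost) at horizon `T`. -/
def costSet {N K : ℕ} (A : Matrix (Fin N) (Fin N) ℝ) (B : Matrix (Fin N) (Fin K) ℝ)
    (m M : Fin K → ℝ) (F : (Fin N → ℝ) → ℝ) (R : ℝ → (Fin N → ℝ) → (Fin K → ℝ) → ℝ)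
    (x0 : Fin N → ℝ) (T : ℝ) : Set ℝ :=
  { c | ∃ (u : ℝ → Fin K → ℝ) (x : ℝ → Fin N → ℝ),
      Measurable u ∧ (∀ t : ℝ, ∀ l : Fin K, m l ≤ u t l ∧ u t l ≤ M l) ∧
      Continuous x ∧
      (∀ t : ℝ, 0 ≤ t →
        x t = x0 + ∫ s in (0:ℝ)..t, (A.mulVec (x s) + B.mulVec (u s))) ∧
      IntervalIntegrable (fun t => R t (x t) (u t)) volume 0 T ∧
      c = F (x T) + ∫ t in (0:ℝ)..T, R t (x t) (u t) }

/-- The set of reduced cost values `Ĵ_û(ẑ0, T)` attained by reduced admissible pairs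
`(û, ẑ)` from `ẑ0` (with integrable running cost) at horizon `T`. -/
def redCostSet {n : ℕ} (Ahat : Matrix (Fin n) (Fin n) ℝ) (mhat Mhat : Fin n → ℝ)
    (Fhat : (Fin n → ℝ) → ℝ) (Rhat : ℝ → (Fin n → ℝ) → (Fin n → ℝ) → ℝ)
    (z0 : Fin n → ℝ) (T : ℝ) : Set ℝ :=
  { c | ∃ (uhat : ℝ → Fin n → ℝ) (zhat : ℝ → Fin n → ℝ),
      Measurable uhat ∧ (∀ t : ℝ, ∀ i : Fin n, mhat i ≤ uhat t i ∧ uhat t i ≤ Mhat i) ∧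
      Continuous zhat ∧
      (∀ t : ℝ, 0 ≤ t →
        zhat t = z0 + ∫ s in (0:ℝ)..t, (Ahat.mulVec (zhat s) + uhat s)) ∧
      IntervalIntegrable (fun t => Rhat t (zhat t) (uhat t)) volume 0 T ∧
      c = Fhat (zhat T) + ∫ t in (0:ℝ)..T, Rhat t (zhat t) (uhat t) }

/-!
Projecting by `L` turns an admissible pair `(u, x)` into the reduced admissible pair
`(L B u, L x)` with the same cost: `L A = Â L` is the control equivalence, and `L B u` sums the
controls of each block, so it lies in `[m̂; M̂]`. Conversely, a reduced control `û` is lifted by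
placing every control of block `i` at the relative position of `û i` in `[m̂ i; M̂ i]`. The
trajectory of the lift projects onto a solution of the reduced integral equation with the same
data, which is `ẑ` by uniqueness for linear integral equations. So both systems attain the same
set of costs, and in particular have the same supremum.
-/

open NormedSpace

section LinearIntegralEquation

variable {E : Type*} [NormedAddCommGroup E] [NormedSpace ℝ E] [CompleteSpace E]
  (A : E →L[ℝ] E)

theorem exp_smul_apply_exp_neg_smul_apply (t : ℝ) (v : E) :
    exp (t • A) (exp ((-t) • A) v) = v := by
  let +nondep : NormedAlgebra ℚ (E →L[ℝ] E) := .restrictScalars ℚ ℝ _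
  have hcomm : Commute (t • A) ((-t) • A) := ((Commute.refl A).smul_right _).smul_left _
  rw [← mul_apply_eq_comp, ← exp_add_of_commute hcomm, ← add_smul, add_neg_cancel,
    zero_smul, exp_zero, one_apply_eq_self]

theorem exists_hasDerivAt_eq_add_of_continuous {c : ℝ → E} (hc : Continuous c) (x₀ : E) :
    ∃ y : ℝ → E, y 0 = x₀ ∧ ∀ t, HasDerivAt y (A (y t) + c t) t := by
  let +nondep : NormedAlgebra ℚ (E →L[ℝ] E) := .restrictScalars ℚ ℝ _
  have hg : Continuous fun s : ℝ => exp ((-s) • A) (c s) := by fun_prop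
  refine ⟨fun t => exp (t • A) (x₀ + ∫ s in (0 : ℝ)..t, exp ((-s) • A) (c s)), by simp,
    fun t => ?_⟩
  convert (hasDerivAt_exp_smul_const' A t).clm_apply
    ((hg.integral_hasStrictDerivAt 0 t).hasDerivAt.const_add x₀) using 1
  rw [mul_apply_eq_comp, exp_smul_apply_exp_neg_smul_apply]

theorem exists_continuous_eq_add_integral {b : ℝ → E}
    (hb : ∀ t₁ t₂, IntervalIntegrable b volume t₁ t₂) (x₀ : E) :
    ∃ x : ℝ → E, Continuous x ∧ ∀ t, x t = x₀ + ∫ s in (0 : ℝ)..t, (A (x s) + b s) := by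
  -- `x = y + ∫₀ᵗ b` solves the equation iff `y` solves it with the continuous forcing `A ∫₀ᵗ b`
  have hβ : Continuous fun t => ∫ s in (0 : ℝ)..t, b s :=
    intervalIntegral.continuous_primitive hb 0
  obtain ⟨y, hy0, hy⟩ := exists_hasDerivAt_eq_add_of_continuous A
    (c := fun t => A (∫ s in (0 : ℝ)..t, b s)) (by fun_prop) x₀
  have hy_cont : Continuous y := continuous_iff_continuousAt.2 fun t => (hy t).continuousAt
  have hAy : Continuous fun t => A (y t) + A (∫ s in (0 : ℝ)..t, b s) := by fun_prop
  refine ⟨fun t => y t + ∫ s in (0 : ℝ)..t, b s, hy_cont.add hβ, fun t => ?_⟩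
  have hy_eq : y t = x₀ + ∫ r in (0 : ℝ)..t, (A (y r) + A (∫ s in (0 : ℝ)..r, b s)) := by
    rw [intervalIntegral.integral_eq_sub_of_hasDerivAt (fun s _ => hy s)
      (hAy.intervalIntegrable _ _), hy0]
    abel
  simp only [map_add]
  rw [intervalIntegral.integral_add (hAy.intervalIntegrable _ _) (hb _ _), hy_eq]
  abel

theorem eq_zero_of_eq_integral {w : ℝ → E} (hw : Continuous w)
    (hwA : ∀ t, 0 ≤ t → w t = ∫ s in (0 : ℝ)..t, A (w s)) {t : ℝ} (ht : 0 ≤ t) : w t = 0 := by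
  have hderiv : ∀ s ∈ Set.Ico 0 t, HasDerivWithinAt w (A (w s)) (Set.Ici s) s := fun s hs =>
    ((A.continuous.comp hw).integral_hasStrictDerivAt 0 s).hasDerivAt.hasDerivWithinAt.congr
      (fun r hr => hwA r (hs.1.trans hr)) (hwA s hs.1)
  have h0 : w 0 = 0 := by rw [hwA 0 le_rfl, intervalIntegral.integral_same]
  exact ODE_solution_unique (v := fun _ => A) (fun _ => A.lipschitz) hw.continuousOn hderiv
    continuousOn_const (fun s _ => by simpa using hasDerivWithinAt_const s _ (0 : E)) h0
    ⟨ht, le_rfl⟩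

theorem eq_of_eq_add_integral {b : ℝ → E} (hb : ∀ t, IntervalIntegrable b volume 0 t)
    {x₀ : E} {x y : ℝ → E} (hx : Continuous x) (hy : Continuous y)
    (hx_eq : ∀ t, 0 ≤ t → x t = x₀ + ∫ s in (0 : ℝ)..t, (A (x s) + b s))
    (hy_eq : ∀ t, 0 ≤ t → y t = x₀ + ∫ s in (0 : ℝ)..t, (A (y s) + b s))
    {t : ℝ} (ht : 0 ≤ t) : x t = y t := by
  refine sub_eq_zero.1 (eq_zero_of_eq_integral A (hx.sub hy) (fun t ht => ?_) ht)
  have hAx : Continuous fun s => A (x s) := by fun_prop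
  have hAy : Continuous fun s => A (y s) := by fun_prop
  rw [Pi.sub_apply, hx_eq t ht, hy_eq t ht, add_sub_add_left_eq_sub,
    ← intervalIntegral.integral_sub ((hAx.intervalIntegrable _ _).add (hb t))
      ((hAy.intervalIntegrable _ _).add (hb t))]
  simp only [add_sub_add_right_eq_sub, Pi.sub_apply, map_sub]

theorem map_eq_add_integral {F : Type*} [NormedAddCommGroup F] [NormedSpace ℝ F] [CompleteSpace F]
    (P : E →L[ℝ] F) {Â : F →L[ℝ] F} (hPA : ∀ v, P (A v) = Â (P v)) {b : ℝ → E} {x₀ : E}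
    {x : ℝ → E} (hx : Continuous x) {t : ℝ} (hb : IntervalIntegrable b volume 0 t)
    (hx_eq : x t = x₀ + ∫ s in (0 : ℝ)..t, (A (x s) + b s)) :
    P (x t) = P x₀ + ∫ s in (0 : ℝ)..t, (Â (P (x s)) + P (b s)) := by
  have hAx : Continuous fun s => A (x s) := by fun_prop
  simp only [← hPA, ← map_add]
  rw [P.intervalIntegral_comp_comm ((hAx.intervalIntegrable _ _).add hb), ← map_add, hx_eq]

end LinearIntegralEquation

theorem intervalIntegrable_of_forall_mem_isBounded {E : Type*} [NormedAddCommGroup E]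
    {f : ℝ → E} (hf : AEStronglyMeasurable f) {s : Set E} (hs : Bornology.IsBounded s)
    (hfs : ∀ t, f t ∈ s) (a b : ℝ) : IntervalIntegrable f volume a b := by
  obtain ⟨C, hC⟩ := hs.exists_norm_le
  rw [intervalIntegrable_iff]
  exact Measure.integrableOn_of_bounded (by simp [Set.uIoc]) hf
    (Filter.Eventually.of_forall fun t => hC _ (hfs t))

noncomputable def mulVecCLM {ι κ : Type*} [Fintype κ] (A : Matrix ι κ ℝ) :
    (κ → ℝ) →L[ℝ] (ι → ℝ) :=
  LinearMap.toContinuousLinearMap A.mulVecLin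

@[simp]
theorem mulVecCLM_apply {ι κ : Type*} [Fintype κ] (A : Matrix ι κ ℝ) (v : κ → ℝ) :
    mulVecCLM A v = A *ᵥ v :=
  rfl

theorem intervalIntegrable_mulVec_of_mem_Icc {ι κ : Type*} [Fintype ι] [Fintype κ]
    (C : Matrix ι κ ℝ) {u : ℝ → κ → ℝ} (hu : Measurable u) {m M : κ → ℝ}
    (hmM : ∀ t, u t ∈ Set.Icc m M) (a b : ℝ) :
    IntervalIntegrable (fun t => C *ᵥ u t) volume a b :=
  intervalIntegrable_of_forall_mem_isBounded
    ((mulVecCLM C).continuous.measurable.comp hu).aestronglyMeasurable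
    ((mulVecCLM C).lipschitz.isBounded_image (Metric.isBounded_Icc m M))
    (fun t => ⟨u t, hmM t, rfl⟩) a b

section Reduction

variable {N n K : ℕ} {π : Fin N → Fin n}

theorem aggL_mulVec_mulVec_of_controlEquivalence {A : Matrix (Fin N) (Fin N) ℝ}
    (hCE : aggL π * A = aggL π * A * avgL π * aggL π) (v : Fin N → ℝ) :
    aggL π *ᵥ (A *ᵥ v) = (aggL π * A * avgL π) *ᵥ (aggL π *ᵥ v) := by
  rw [mulVec_mulVec, mulVec_mulVec, ← hCE]

theorem aggL_mul_mulVec_eq_redBound {d : Fin K → Fin N} {B : Matrix (Fin N) (Fin K) ℝ}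
    (hB : ∀ j l, B j l = if j = d l then 1 else 0) (v : Fin K → ℝ) :
    (aggL π * B) *ᵥ v = redBound π d v := by
  ext i
  simp [redBound, mulVec, dotProduct, mul_apply, aggL, hB, Finset.sum_filter]

theorem aggL_mulVec_eq_add_integral {A : Matrix (Fin N) (Fin N) ℝ}
    (hCE : aggL π * A = aggL π * A * avgL π * aggL π) {B : Matrix (Fin N) (Fin K) ℝ}
    {u : ℝ → Fin K → ℝ} {x : ℝ → Fin N → ℝ} {x₀ : Fin N → ℝ} (hx : Continuous x) {t : ℝ}
    (hBu : IntervalIntegrable (fun s => B *ᵥ u s) volume 0 t)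
    (hx_eq : x t = x₀ + ∫ s in (0 : ℝ)..t, (A *ᵥ x s + B *ᵥ u s)) :
    aggL π *ᵥ x t = aggL π *ᵥ x₀ +
      ∫ s in (0 : ℝ)..t, ((aggL π * A * avgL π) *ᵥ (aggL π *ᵥ x s) + (aggL π * B) *ᵥ u s) := by
  simpa [mulVec_mulVec] using map_eq_add_integral (mulVecCLM A) (mulVecCLM (aggL π))
    (Â := mulVecCLM (aggL π * A * avgL π)) (aggL_mulVec_mulVec_of_controlEquivalence hCE)
    hx hBu hx_eq

theorem redBound_mono (d : Fin K → Fin N) {v w : Fin K → ℝ} (h : ∀ l, v l ≤ w l) (i : Fin n) :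
    redBound π d v i ≤ redBound π d w i :=
  Finset.sum_le_sum fun l _ => h l

/-- When `m̂ i = M̂ i`, the relative position of `v i` in `[m̂ i, M̂ i]` divides by zero and is
`0`, which is harmless since then `v i = m̂ i`. -/
noncomputable def liftControl (π : Fin N → Fin n) (d : Fin K → Fin N) (m M : Fin K → ℝ)
    (v : Fin n → ℝ) (l : Fin K) : ℝ :=
  m l + (v (π (d l)) - redBound π d m (π (d l))) /
    (redBound π d M (π (d l)) - redBound π d m (π (d l))) * (M l - m l)

variable {d : Fin K → Fin N} {m M : Fin K → ℝ} {v : Fin n → ℝ}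

theorem liftControl_mem_box (hmM : ∀ l, m l ≤ M l)
    (hv : ∀ i, redBound π d m i ≤ v i ∧ v i ≤ redBound π d M i) (l : Fin K) :
    m l ≤ liftControl π d m M v l ∧ liftControl π d m M v l ≤ M l := by
  obtain ⟨hlo, hhi⟩ := hv (π (d l))
  have hθ₀ := div_nonneg (sub_nonneg.2 hlo) (sub_nonneg.2 (hlo.trans hhi))
  have hθ₁ := div_le_one_of_le₀ (sub_le_sub_right hhi (redBound π d m (π (d l))))
    (sub_nonneg.2 (hlo.trans hhi))
  have hMm := sub_nonneg.2 (hmM l)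
  constructor <;> unfold liftControl <;> nlinarith

theorem redBound_liftControl (hv : ∀ i, redBound π d m i ≤ v i ∧ v i ≤ redBound π d M i) :
    redBound π d (liftControl π d m M v) = v := by
  ext i
  set θ := (v i - redBound π d m i) / (redBound π d M i - redBound π d m i)
  have hsum : redBound π d (liftControl π d m M v) i =
      redBound π d m i + θ * (redBound π d M i - redBound π d m i) := by
    simp only [redBound, ← Finset.sum_sub_distrib, Finset.mul_sum, ← Finset.sum_add_distrib]
    refine Finset.sum_congr rfl fun l hl => ?_
    rw [liftControl, (Finset.mem_filter.1 hl).2]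
  rw [hsum]
  rcases eq_or_ne (redBound π d M i - redBound π d m i) 0 with hzero | hne
  · rw [hzero, mul_zero, add_zero]
    linarith [hv i]
  · rw [div_mul_cancel₀ _ hne]
    ring

theorem measurable_liftControl {u : ℝ → Fin n → ℝ} (hu : Measurable u) :
    Measurable fun t => liftControl π d m M (u t) := by
  unfold liftControl
  fun_prop

end Reduction

section CostSets

variable {N n K : ℕ} {π : Fin N → Fin n} {A : Matrix (Fin N) (Fin N) ℝ}
  {d : Fin K → Fin N} {B : Matrix (Fin N) (Fin K) ℝ} {m M : Fin K → ℝ}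
  {F : (Fin N → ℝ) → ℝ} {R : ℝ → (Fin N → ℝ) → (Fin K → ℝ) → ℝ}
  {Fhat : (Fin n → ℝ) → ℝ} {Rhat : ℝ → (Fin n → ℝ) → (Fin n → ℝ) → ℝ}

theorem costSet_subset_redCostSet (hCE : aggL π * A = aggL π * A * avgL π * aggL π)
    (hB : ∀ j l, B j l = if j = d l then 1 else 0)
    (hFhat : ∀ x, F x = Fhat (aggL π *ᵥ x))
    (hRhat : ∀ t x v, R t x v = Rhat t (aggL π *ᵥ x) ((aggL π * B) *ᵥ v))
    (x₀ : Fin N → ℝ) (T : ℝ) :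
    costSet A B m M F R x₀ T ⊆ redCostSet (aggL π * A * avgL π) (redBound π d m)
      (redBound π d M) Fhat Rhat (aggL π *ᵥ x₀) T := by
  rintro c ⟨u, x, hu, hu_box, hx, hx_eq, hR, rfl⟩
  refine ⟨fun t => (aggL π * B) *ᵥ u t, fun t => aggL π *ᵥ x t,
    (mulVecCLM _).continuous.measurable.comp hu, fun t i => ?_,
    (mulVecCLM _).continuous.comp hx, fun t ht => ?_, by simpa only [hRhat] using hR,
    by simp only [hFhat, hRhat]⟩
  · dsimp only
    rw [aggL_mul_mulVec_eq_redBound hB]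
    exact ⟨redBound_mono d (fun l => (hu_box t l).1) i,
      redBound_mono d (fun l => (hu_box t l).2) i⟩
  · exact aggL_mulVec_eq_add_integral hCE hx
      (intervalIntegrable_mulVec_of_mem_Icc B hu
        (fun t => ⟨fun l => (hu_box t l).1, fun l => (hu_box t l).2⟩) 0 t) (hx_eq t ht)

theorem redCostSet_subset_costSet (hCE : aggL π * A = aggL π * A * avgL π * aggL π)
    (hB : ∀ j l, B j l = if j = d l then 1 else 0) (hmM : ∀ l, m l ≤ M l)
    (hFhat : ∀ x, F x = Fhat (aggL π *ᵥ x))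
    (hRhat : ∀ t x v, R t x v = Rhat t (aggL π *ᵥ x) ((aggL π * B) *ᵥ v))
    (x₀ : Fin N → ℝ) {T : ℝ} (hT : 0 ≤ T) :
    redCostSet (aggL π * A * avgL π) (redBound π d m) (redBound π d M) Fhat Rhat
      (aggL π *ᵥ x₀) T ⊆ costSet A B m M F R x₀ T := by
  rintro c ⟨uhat, zhat, huhat, huhat_box, hzhat, hzhat_eq, hRhat_int, rfl⟩
  set u : ℝ → Fin K → ℝ := fun t => liftControl π d m M (uhat t)
  have hu : Measurable u := measurable_liftControl huhat
  have hu_box : ∀ t l, m l ≤ u t l ∧ u t l ≤ M l := fun t =>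
    liftControl_mem_box hmM (huhat_box t)
  have hLBu : ∀ t, (aggL π * B) *ᵥ u t = uhat t := fun t =>
    (aggL_mul_mulVec_eq_redBound hB _).trans (redBound_liftControl (huhat_box t))
  have hBu := intervalIntegrable_mulVec_of_mem_Icc B hu
    (fun t => ⟨fun l => (hu_box t l).1, fun l => (hu_box t l).2⟩)
  obtain ⟨x, hx, hx_eq⟩ := exists_continuous_eq_add_integral (mulVecCLM A) hBu x₀
  have huhat_int : ∀ t, IntervalIntegrable uhat volume 0 t :=
    intervalIntegrable_of_forall_mem_isBounded huhat.aestronglyMeasurable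
      (Metric.isBounded_Icc _ _)
      (fun t => ⟨fun i => (huhat_box t i).1, fun i => (huhat_box t i).2⟩) 0
  have hLx : ∀ t, 0 ≤ t → aggL π *ᵥ x t = zhat t :=
    fun t => eq_of_eq_add_integral (mulVecCLM (aggL π * A * avgL π)) (x := (aggL π *ᵥ x ·))
      huhat_int ((mulVecCLM _).continuous.comp hx) hzhat
      (fun t _ => by simpa only [hLBu, mulVecCLM_apply] using
        aggL_mulVec_eq_add_integral hCE hx (hBu 0 t) (hx_eq t))
      hzhat_eq
  have hR : ∀ t, 0 ≤ t → R t (x t) (u t) = Rhat t (zhat t) (uhat t) := fun t ht => by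
    rw [hRhat, hLx t ht, hLBu]
  refine ⟨u, x, hu, hu_box, hx, fun t _ => hx_eq t, hRhat_int.congr fun t ht => ?_, ?_⟩
  · rw [Set.uIoc_of_le hT] at ht
    exact (hR t ht.1.le).symm
  · rw [hFhat, hLx T hT]
    refine congrArg _ (intervalIntegral.integral_congr fun t ht => ?_).symm
    rw [Set.uIcc_of_le hT] at ht
    exact hR t ht.1

end CostSets

theorem value_function_sup_preserved_general {N n K : ℕ} (π : Fin N → Fin n)
    (A : Matrix (Fin N) (Fin N) ℝ)
    (hCE : aggL π * A = aggL π * A * avgL π * aggL π)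
    (d : Fin K → Fin N)
    (B : Matrix (Fin N) (Fin K) ℝ)
    (hB : ∀ (j : Fin N) (l : Fin K), B j l = if j = d l then 1 else 0)
    (m M : Fin K → ℝ) (hmM : ∀ l, m l ≤ M l)
    (F : (Fin N → ℝ) → ℝ) (R : ℝ → (Fin N → ℝ) → (Fin K → ℝ) → ℝ)
    (Fhat : (Fin n → ℝ) → ℝ) (Rhat : ℝ → (Fin n → ℝ) → (Fin n → ℝ) → ℝ)
    (hFhat : ∀ x : Fin N → ℝ, F x = Fhat ((aggL π).mulVec x))
    (hRhat : ∀ (t : ℝ) (x : Fin N → ℝ) (v : Fin K → ℝ),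
      R t x v = Rhat t ((aggL π).mulVec x) ((aggL π * B).mulVec v))
    (x0 : Fin N → ℝ) (T : ℝ) (hT : 0 ≤ T) :
    sSup (costSet A B m M F R x0 T) =
      sSup (redCostSet (aggL π * A * avgL π) (redBound π d m) (redBound π d M)
        Fhat Rhat ((aggL π).mulVec x0) T) :=
  congrArg sSup <| (costSet_subset_redCostSet hCE hB hFhat hRhat x0 T).antisymm
    (redCostSet_subset_costSet hCE hB hmM hFhat hRhat x0 hT)

/-- Theorem 2, forward direction for suprema: under a control equivalence, the optimal (supremum) cost of the original system equals that of the reduced system. -/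
theorem value_function_sup_preserved {N n K : ℕ} (π : Fin N → Fin n)
    (hπ : Function.Surjective π) (A : Matrix (Fin N) (Fin N) ℝ)
    (hCE : aggL π * A = aggL π * A * avgL π * aggL π)
    (d : Fin K → Fin N) (hd : Function.Injective d)
    (B : Matrix (Fin N) (Fin K) ℝ)
    (hB : ∀ (j : Fin N) (l : Fin K), B j l = if j = d l then 1 else 0)
    (m M : Fin K → ℝ) (hmM : ∀ l, m l ≤ M l)
    (F : (Fin N → ℝ) → ℝ) (R : ℝ → (Fin N → ℝ) → (Fin K → ℝ) → ℝ)
    (Fhat : (Fin n → ℝ) → ℝ) (Rhat : ℝ → (Fin n → ℝ) → (Fin n → ℝ) → ℝ)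
    (hFhat : ∀ x : Fin N → ℝ, F x = Fhat ((aggL π).mulVec x))
    (hRhat : ∀ (t : ℝ) (x : Fin N → ℝ) (v : Fin K → ℝ),
      R t x v = Rhat t ((aggL π).mulVec x) ((aggL π * B).mulVec v))
    (x0 : Fin N → ℝ) (T : ℝ) (hT : 0 ≤ T) :
    sSup (costSet A B m M F R x0 T) =
      sSup (redCostSet (aggL π * A * avgL π) (redBound π d m) (redBound π d M)
        Fhat Rhat ((aggL π).mulVec x0) T) :=
  value_function_sup_preserved_general π A hCE d B hB m M hmM F R Fhat Rhat hFhat hRhat x0 T hT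
end

section
/- (Theorem 2, converse direction.) Let π : Fin N → Fin n encode a partition with matrices L, L̄, let A ∈ ℝ^{N×N}, let B have unit-vector columns given by an injective driver map d, and let m ≤ M componentwise. Suppose that for every pair of final and running costs F, R that are constant on the partition (with induced reduced costs F̂, R̂), every x0 ∈ ℝ^N, and every T ≥ 0, one has V^inf(x0,T) = V̂^inf(L·x0,T) and V^sup(x0,T) = V̂^sup(L·x0,T). Then the partition is a control equivalence for A, i.e., L·A = L·A·L̄·L. -/
/-!
Fix `x₀` and a constant reduced control `b ∈ [m̂; M̂]`, and let `ẑ` be the reduced trajectory from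
`L x₀` driven by `b`. For the final cost `F = 1` on `{x | L x = ẑ(T)}`, `0` elsewhere, and `R = 0`,
the reduced supremum is `1`; hence so is the original one, and since all costs are `0` or `1`,
some admissible trajectory satisfies `L x(T) = ẑ(T)`. Uniformly over admissible controls,
`x(T) = x₀ + T A x₀ + ∫₀ᵀ B u + O(T²)`, and `L B u(t) ∈ [m̂; M̂]`; comparing with
`ẑ(T) = L x₀ + T (Â L x₀ + b) + o(T)` gives `L A x₀ + m̂ ≤ Â L x₀ + b ≤ L A x₀ + M̂`.
Taking `b = m̂` and `b = M̂` yields `L A x₀ = Â L x₀` for every `x₀`.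
-/

open Matrix MeasureTheory

open Set Filter Topology

section Linearization

variable {E : Type*} [NormedAddCommGroup E] [NormedSpace ℝ E]
  {a : E →L[ℝ] E} {x₀ : E} {g : ℝ → E} {x : ℝ → E} {C T : ℝ}

theorem norm_sub_le_of_eq_add_integral (hg : ∀ s, ‖g s‖ ≤ C) (hx : Continuous x)
    (heq : ∀ t, 0 ≤ t → x t = x₀ + ∫ s in (0:ℝ)..t, (a (x s) + g s))
    (hT : 0 ≤ T) (hsmall : T * ‖a‖ ≤ 1 / 2) {t : ℝ} (ht : t ∈ Icc 0 T) :
    ‖x t - x₀‖ ≤ 2 * T * (‖a‖ * ‖x₀‖ + C) := by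
  obtain ⟨t₁, ht₁, hmax⟩ := isCompact_Icc.exists_isMaxOn (nonempty_Icc.2 hT)
    ((hx.sub continuous_const).norm.continuousOn : ContinuousOn (fun s => ‖x s - x₀‖) _)
  set D := ‖x t₁ - x₀‖ with hD_def
  have hbound : ∀ s ∈ uIoc 0 t₁, ‖a (x s) + g s‖ ≤ ‖a‖ * (‖x₀‖ + D) + C := by
    intro s hs
    rw [uIoc_of_le ht₁.1] at hs
    have hxs : ‖x s‖ ≤ ‖x₀‖ + D :=
      (norm_le_norm_add_norm_sub' _ _).trans
        (add_le_add_right (hmax ⟨hs.1.le, hs.2.trans ht₁.2⟩) _)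
    calc ‖a (x s) + g s‖ ≤ ‖a‖ * ‖x s‖ + C :=
          (norm_add_le _ _).trans (add_le_add (a.le_opNorm _) (hg s))
      _ ≤ ‖a‖ * (‖x₀‖ + D) + C := by gcongr
  have hD : D ≤ T * (‖a‖ * (‖x₀‖ + D) + C) := by
    have hC : 0 ≤ C := (norm_nonneg _).trans (hg 0)
    calc D = ‖∫ s in (0:ℝ)..t₁, (a (x s) + g s)‖ := by
          rw [hD_def, heq t₁ ht₁.1, add_sub_cancel_left]
      _ ≤ (‖a‖ * (‖x₀‖ + D) + C) * |t₁ - 0| :=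
          intervalIntegral.norm_integral_le_of_norm_le_const hbound
      _ ≤ T * (‖a‖ * (‖x₀‖ + D) + C) := by
          rw [sub_zero, abs_of_nonneg ht₁.1, mul_comm]; gcongr; exact ht₁.2
  have hhalf : T * ‖a‖ * D ≤ 1 / 2 * D := mul_le_mul_of_nonneg_right hsmall (norm_nonneg _)
  have hDt : ‖x t - x₀‖ ≤ D := hmax ht
  exact hDt.trans (by nlinarith)

theorem norm_sub_sub_integral_le [CompleteSpace E] (hgm : AEStronglyMeasurable g)
    (hg : ∀ s, ‖g s‖ ≤ C) (hx : Continuous x)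
    (heq : ∀ t, 0 ≤ t → x t = x₀ + ∫ s in (0:ℝ)..t, (a (x s) + g s))
    (hT : 0 ≤ T) (hsmall : T * ‖a‖ ≤ 1 / 2) :
    ‖x T - x₀ - T • a x₀ - ∫ s in (0:ℝ)..T, g s‖ ≤ 2 * ‖a‖ * (‖a‖ * ‖x₀‖ + C) * T ^ 2 := by
  have hgi : IntervalIntegrable g volume 0 T :=
    (intervalIntegrable_const (c := C)).mono_fun' hgm.restrict (Eventually.of_forall hg)
  have hxi : IntervalIntegrable (fun s => a (x s)) volume 0 T :=
    (a.continuous.comp hx).intervalIntegrable 0 T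
  have hrepr : x T - x₀ - T • a x₀ - ∫ s in (0:ℝ)..T, g s = ∫ s in (0:ℝ)..T, a (x s - x₀) := by
    simp only [map_sub]
    rw [heq T hT, intervalIntegral.integral_add hxi hgi,
      intervalIntegral.integral_sub hxi intervalIntegrable_const, intervalIntegral.integral_const]
    simp only [sub_zero]
    abel
  calc _ = ‖∫ s in (0:ℝ)..T, a (x s - x₀)‖ := by rw [hrepr]
    _ ≤ ‖a‖ * (2 * T * (‖a‖ * ‖x₀‖ + C)) * |T - 0| := by
        refine intervalIntegral.norm_integral_le_of_norm_le_const fun s hs => ?_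
        rw [uIoc_of_le hT] at hs
        exact (a.le_opNorm _).trans <| mul_le_mul_of_nonneg_left
          (norm_sub_le_of_eq_add_integral hg hx heq hT hsmall ⟨hs.1.le, hs.2⟩) (norm_nonneg _)
    _ = 2 * ‖a‖ * (‖a‖ * ‖x₀‖ + C) * T ^ 2 := by rw [sub_zero, abs_of_nonneg hT]; ring

theorem apply_sub_bounds_of_eq_add_integral [CompleteSpace E] (φ : E →L[ℝ] ℝ) {lo hi : ℝ}
    (hlo : ∀ s, lo ≤ φ (g s)) (hhi : ∀ s, φ (g s) ≤ hi)
    (hgm : AEStronglyMeasurable g) (hg : ∀ s, ‖g s‖ ≤ C)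
    (hx : Continuous x) (heq : ∀ t, 0 ≤ t → x t = x₀ + ∫ s in (0:ℝ)..t, (a (x s) + g s))
    (hT : 0 ≤ T) (hsmall : T * ‖a‖ ≤ 1 / 2) :
    T * (φ (a x₀) + lo) - ‖φ‖ * (2 * ‖a‖ * (‖a‖ * ‖x₀‖ + C)) * T ^ 2 ≤ φ (x T) - φ x₀ ∧
      φ (x T) - φ x₀ ≤ T * (φ (a x₀) + hi) + ‖φ‖ * (2 * ‖a‖ * (‖a‖ * ‖x₀‖ + C)) * T ^ 2 := by
  have hgi : IntervalIntegrable g volume 0 T :=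
    (intervalIntegrable_const (c := C)).mono_fun' hgm.restrict (Eventually.of_forall hg)
  have hφgi : IntervalIntegrable (fun s => φ (g s)) volume 0 T :=
    ⟨φ.integrable_comp hgi.1, φ.integrable_comp hgi.2⟩
  have herr : |φ (x T) - φ x₀ - T * φ (a x₀) - ∫ s in (0:ℝ)..T, φ (g s)|
      ≤ ‖φ‖ * (2 * ‖a‖ * (‖a‖ * ‖x₀‖ + C) * T ^ 2) := by
    rw [φ.intervalIntegral_comp_comm hgi, ← smul_eq_mul, ← φ.map_smul, ← map_sub, ← map_sub,
      ← map_sub]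
    exact (φ.le_opNorm _).trans
      (mul_le_mul_of_nonneg_left (norm_sub_sub_integral_le hgm hg hx heq hT hsmall) (norm_nonneg _))
  have hlo' : T * lo ≤ ∫ s in (0:ℝ)..T, φ (g s) := by
    simpa using intervalIntegral.integral_mono_on hT intervalIntegrable_const hφgi fun s _ => hlo s
  have hhi' : ∫ s in (0:ℝ)..T, φ (g s) ≤ T * hi := by
    simpa using intervalIntegral.integral_mono_on hT hφgi intervalIntegrable_const fun s _ => hhi s
  constructor <;> nlinarith [abs_le.1 herr]

end Linearization

section ConstantInput

variable {E : Type*} [NormedAddCommGroup E] [NormedSpace ℝ E] [CompleteSpace E]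

theorem hasDerivAt_exp_smul_apply (a : E →L[ℝ] E) (v : E) (t : ℝ) :
    HasDerivAt (fun s : ℝ => NormedSpace.exp (s • a) v) (a (NormedSpace.exp (t • a) v)) t := by
  simpa using (hasDerivAt_exp_smul_const' (𝕂 := ℝ) a t).clm_apply (hasDerivAt_const t v)

theorem exists_hasDerivAt_eq_add_const (a : E →L[ℝ] E) (z₀ b : E) :
    ∃ z : ℝ → E, z 0 = z₀ ∧ ∀ t, HasDerivAt z (a (z t) + b) t := by
  set e : ℝ → E →L[ℝ] E := fun t => NormedSpace.exp (t • a)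
  have heb : Continuous fun t => e t b :=
    continuous_iff_continuousAt.2 fun t => (hasDerivAt_exp_smul_apply a b t).continuousAt
  -- variation of constants: `z t = e^{ta} z₀ + ∫₀ᵗ e^{ra} b dr`
  refine ⟨fun t => e t z₀ + ∫ r in (0:ℝ)..t, e r b, by simp [e], fun t => ?_⟩
  have hint : a (∫ r in (0:ℝ)..t, e r b) = e t b - b := by
    rw [← a.intervalIntegral_comp_comm (heb.intervalIntegrable 0 t),
      intervalIntegral.integral_eq_sub_of_hasDerivAt (fun r _ => hasDerivAt_exp_smul_apply a b r)
        ((a.continuous.comp heb).intervalIntegrable 0 t)]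
    simp [e]
  refine ((hasDerivAt_exp_smul_apply a z₀ t).add
    (heb.integral_hasStrictDerivAt 0 t).hasDerivAt).congr_deriv ?_
  rw [map_add, hint]
  abel

theorem exists_continuous_eq_add_integral_const (a : E →L[ℝ] E) (z₀ b : E) :
    ∃ z : ℝ → E, Continuous z ∧ (∀ t, z t = z₀ + ∫ s in (0:ℝ)..t, (a (z s) + b)) ∧
      HasDerivAt z (a z₀ + b) 0 := by
  obtain ⟨z, hz₀, hz⟩ := exists_hasDerivAt_eq_add_const a z₀ b
  have hzc : Continuous z := continuous_iff_continuousAt.2 fun t => (hz t).continuousAt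
  refine ⟨z, hzc, fun t => ?_, hz₀ ▸ hz 0⟩
  rw [intervalIntegral.integral_eq_sub_of_hasDerivAt (fun s _ => hz s)
    (((a.continuous.comp hzc).add continuous_const).intervalIntegrable 0 t), hz₀]
  abel

end ConstantInput

section Partition

variable {N n K : ℕ}

def IsAdmissiblePair (A : Matrix (Fin N) (Fin N) ℝ) (B : Matrix (Fin N) (Fin K) ℝ)
    (m M : Fin K → ℝ) (x₀ : Fin N → ℝ) (u : ℝ → Fin K → ℝ) (x : ℝ → Fin N → ℝ) : Prop :=
  Measurable u ∧ (∀ t l, m l ≤ u t l ∧ u t l ≤ M l) ∧ Continuous x ∧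
    ∀ t, 0 ≤ t → x t = x₀ + ∫ s in (0:ℝ)..t, (A *ᵥ x s + B *ᵥ u s)

theorem sSup_eq_one_iff_one_mem {S : Set ℝ} (h : S ⊆ {0, 1}) : sSup S = 1 ↔ 1 ∈ S := by
  have hfin : S.Finite := (Set.toFinite {0, 1}).subset h
  constructor
  · intro hS
    rcases S.eq_empty_or_nonempty with rfl | hne
    · simp at hS
    · exact hS ▸ hne.csSup_mem hfin
  · intro h1
    refine le_antisymm (csSup_le ⟨1, h1⟩ fun c hc => ?_) (le_csSup hfin.bddAbove h1)
    rcases h hc with rfl | rfl <;> norm_num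

theorem costSet_ite_subset (A : Matrix (Fin N) (Fin N) ℝ) (B : Matrix (Fin N) (Fin K) ℝ)
    (m M : Fin K → ℝ) (p : (Fin N → ℝ) → Prop) [DecidablePred p] (x₀ : Fin N → ℝ) (T : ℝ) :
    costSet A B m M (fun x => if p x then 1 else 0) (fun _ _ _ => 0) x₀ T ⊆ {0, 1} := by
  rintro c ⟨u, x, -, -, -, -, -, rfl⟩
  by_cases hp : p (x T) <;> simp [hp]

theorem redCostSet_ite_subset (Ahat : Matrix (Fin n) (Fin n) ℝ) (mhat Mhat : Fin n → ℝ)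
    (p : (Fin n → ℝ) → Prop) [DecidablePred p] (z₀ : Fin n → ℝ) (T : ℝ) :
    redCostSet Ahat mhat Mhat (fun z => if p z then 1 else 0) (fun _ _ _ => 0) z₀ T ⊆ {0, 1} := by
  rintro c ⟨u, z, -, -, -, -, -, rfl⟩
  by_cases hp : p (z T) <;> simp [hp]

theorem exists_isAdmissiblePair_of_sSup_costSet_eq_one {A : Matrix (Fin N) (Fin N) ℝ}
    {B : Matrix (Fin N) (Fin K) ℝ} {m M : Fin K → ℝ} {p : (Fin N → ℝ) → Prop} [DecidablePred p]
    {x₀ : Fin N → ℝ} {T : ℝ}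
    (h : sSup (costSet A B m M (fun x => if p x then 1 else 0) (fun _ _ _ => 0) x₀ T) = 1) :
    ∃ u x, IsAdmissiblePair A B m M x₀ u x ∧ p (x T) := by
  obtain ⟨u, x, hu, hub, hx, heq, -, hc⟩ := (sSup_eq_one_iff_one_mem (costSet_ite_subset ..)).1 h
  refine ⟨u, x, ⟨hu, hub, hx, heq⟩, ?_⟩
  by_contra hp
  simp [hp] at hc

theorem norm_le_max_norm_of_mem_Icc {ι : Type*} [Fintype ι] {m M v : ι → ℝ}
    (hv : v ∈ Icc m M) : ‖v‖ ≤ max ‖m‖ ‖M‖ := by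
  refine (pi_norm_le_iff_of_nonneg (by positivity)).2 fun l => ?_
  simp only [Real.norm_eq_abs]
  exact (abs_le_max_abs_abs (hv.1 l) (hv.2 l)).trans
    (max_le_max (norm_le_pi_norm m l) (norm_le_pi_norm M l))

theorem aggL_mul_mulVec_mem_Icc_redBound {π : Fin N → Fin n} {d : Fin K → Fin N}
    {B : Matrix (Fin N) (Fin K) ℝ} (hB : ∀ j l, B j l = if j = d l then 1 else 0)
    {m M v : Fin K → ℝ} (hv : v ∈ Icc m M) :
    (aggL π * B) *ᵥ v ∈ Icc (redBound π d m) (redBound π d M) := by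
  have hentry : ∀ i l, (aggL π * B) i l = if π (d l) = i then 1 else 0 := by
    intro i l
    simp [Matrix.mul_apply, aggL, hB]
  have happly : (aggL π * B) *ᵥ v = redBound π d v := by
    ext i
    simp [mulVec, dotProduct, hentry, redBound, Finset.sum_filter]
  rw [happly]
  exact ⟨fun i => Finset.sum_le_sum fun l _ => hv.1 l, fun i => Finset.sum_le_sum fun l _ => hv.2 l⟩

theorem exists_eventually_aggL_mulVec_sub_mem_Icc {π : Fin N → Fin n}
    {A : Matrix (Fin N) (Fin N) ℝ} {d : Fin K → Fin N} {B : Matrix (Fin N) (Fin K) ℝ}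
    (hB : ∀ j l, B j l = if j = d l then 1 else 0) (m M : Fin K → ℝ) (x₀ : Fin N → ℝ)
    (i : Fin n) :
    ∃ k, ∀ᶠ T in 𝓝[>] (0:ℝ), ∀ u x, IsAdmissiblePair A B m M x₀ u x →
      (aggL π *ᵥ x T - aggL π *ᵥ x₀) i ∈
        Icc (T * (((aggL π * A) *ᵥ x₀) i + redBound π d m i) - k * T ^ 2)
          (T * (((aggL π * A) *ᵥ x₀) i + redBound π d M i) + k * T ^ 2) := by
  set aA := (mulVecLin A).toContinuousLinearMap
  set aB := (mulVecLin B).toContinuousLinearMap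
  set φ : (Fin N → ℝ) →L[ℝ] ℝ :=
    (ContinuousLinearMap.proj i).comp (mulVecLin (aggL π)).toContinuousLinearMap
  refine ⟨‖φ‖ * (2 * ‖aA‖ * (‖aA‖ * ‖x₀‖ + ‖aB‖ * max ‖m‖ ‖M‖)), ?_⟩
  have hsmall : ∀ᶠ T in 𝓝 (0:ℝ), T * ‖aA‖ < 1 / 2 :=
    (continuous_id.mul continuous_const).continuousAt.eventually_lt continuousAt_const
      (by norm_num)
  filter_upwards [nhdsWithin_le_nhds hsmall, self_mem_nhdsWithin] with T hTa hT
    u x ⟨hu, hub, hx, heq⟩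
  have hφ : ∀ y, φ y = (aggL π *ᵥ y) i := fun _ => rfl
  have hφB : ∀ s, φ (aB (u s)) = ((aggL π * B) *ᵥ u s) i := fun s => by
    rw [hφ, ← mulVec_mulVec]; rfl
  have hφA : φ (aA x₀) = ((aggL π * A) *ᵥ x₀) i := by rw [hφ, ← mulVec_mulVec]; rfl
  have hub' : ∀ s, u s ∈ Icc m M := fun s => ⟨fun l => (hub s l).1, fun l => (hub s l).2⟩
  have hBu : ∀ s, (aggL π * B) *ᵥ u s ∈ Icc (redBound π d m) (redBound π d M) := fun s =>
    aggL_mul_mulVec_mem_Icc_redBound hB (hub' s)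
  obtain ⟨hlo, hhi⟩ := apply_sub_bounds_of_eq_add_integral (a := aA) (g := fun s => aB (u s)) φ
    (fun s => (hφB s).symm ▸ (hBu s).1 i) (fun s => (hφB s).symm ▸ (hBu s).2 i)
    (aB.continuous.measurable.comp hu).aestronglyMeasurable
    (fun s => (aB.le_opNorm _).trans
      (mul_le_mul_of_nonneg_left (norm_le_max_norm_of_mem_Icc (hub' s)) (norm_nonneg _)))
    hx heq (le_of_lt hT) hTa.le
  rw [hφA, hφ, hφ, ← Pi.sub_apply] at hlo hhi
  exact ⟨hlo, hhi⟩

theorem sub_mem_Icc_redBound_of_tracking {π : Fin N → Fin n}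
    {A : Matrix (Fin N) (Fin N) ℝ} {d : Fin K → Fin N} {B : Matrix (Fin N) (Fin K) ℝ}
    (hB : ∀ j l, B j l = if j = d l then 1 else 0) {m M : Fin K → ℝ} {x₀ : Fin N → ℝ}
    {z : ℝ → Fin n → ℝ} {w : Fin n → ℝ}
    (hz₀ : z 0 = aggL π *ᵥ x₀) (hz : HasDerivWithinAt z w (Ioi 0) 0)
    (htrack : ∀ T, 0 < T → ∃ u x, IsAdmissiblePair A B m M x₀ u x ∧ aggL π *ᵥ x T = z T) :
    w - (aggL π * A) *ᵥ x₀ ∈ Icc (redBound π d m) (redBound π d M) := by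
  suffices h : ∀ i, redBound π d m i ≤ w i - ((aggL π * A) *ᵥ x₀) i ∧
      w i - ((aggL π * A) *ᵥ x₀) i ≤ redBound π d M i from
    ⟨fun i => (h i).1, fun i => (h i).2⟩
  intro i
  set v := ((aggL π * A) *ᵥ x₀) i
  obtain ⟨k, hk⟩ := exists_eventually_aggL_mulVec_sub_mem_Icc (π := π) hB m M x₀ i
  have hslope : Tendsto (fun T => (z T i - z 0 i) / T) (𝓝[>] 0) (𝓝 (w i)) := by
    refine ((hasDerivWithinAt_iff_tendsto_slope' (s := Ioi 0) (lt_irrefl 0)).1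
      (hasDerivWithinAt_pi.1 hz i)).congr fun T => ?_
    rw [slope_def_field, sub_zero]
  have hbounds : ∀ᶠ T in 𝓝[>] 0, v + redBound π d m i + (-k) * T ≤ (z T i - z 0 i) / T ∧
      (z T i - z 0 i) / T ≤ v + redBound π d M i + k * T := by
    filter_upwards [hk, self_mem_nhdsWithin] with T hkT hT
    obtain ⟨u, x, hux, hxT⟩ := htrack T hT
    obtain ⟨hlo, hhi⟩ := hkT u x hux
    rw [hxT, ← hz₀, Pi.sub_apply] at hlo hhi
    constructor
    · rw [le_div_iff₀ hT]; nlinarith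
    · rw [div_le_iff₀ hT]; nlinarith
  have hlim : ∀ c c' : ℝ, Tendsto (fun T => c + c' * T) (𝓝[>] 0) (𝓝 c) := fun c c' =>
    tendsto_nhdsWithin_of_tendsto_nhds (by simpa using (continuous_const.add
      (continuous_const.mul continuous_id)).tendsto (0:ℝ) (f := fun T => c + c' * T))
  constructor
  · linarith [le_of_tendsto_of_tendsto (hlim _ _) hslope (hbounds.mono fun _ h => h.1)]
  · linarith [le_of_tendsto_of_tendsto hslope (hlim _ _) (hbounds.mono fun _ h => h.2)]

end Partition

theorem controlEquivalence_of_value_functions_preserved_general {N n K : ℕ} (π : Fin N → Fin n)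
    (A : Matrix (Fin N) (Fin N) ℝ)
    (d : Fin K → Fin N)
    (B : Matrix (Fin N) (Fin K) ℝ)
    (hB : ∀ (j : Fin N) (l : Fin K), B j l = if j = d l then 1 else 0)
    (m M : Fin K → ℝ) (hmM : ∀ l, m l ≤ M l)
    (hval : ∀ (F : (Fin N → ℝ) → ℝ) (R : ℝ → (Fin N → ℝ) → (Fin K → ℝ) → ℝ)
      (Fhat : (Fin n → ℝ) → ℝ) (Rhat : ℝ → (Fin n → ℝ) → (Fin n → ℝ) → ℝ),
      (∀ x : Fin N → ℝ, F x = Fhat ((aggL π).mulVec x)) →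
      (∀ (t : ℝ) (x : Fin N → ℝ) (v : Fin K → ℝ),
        R t x v = Rhat t ((aggL π).mulVec x) ((aggL π * B).mulVec v)) →
      ∀ (x0 : Fin N → ℝ) (T : ℝ), 0 ≤ T →
        sInf (costSet A B m M F R x0 T) =
          sInf (redCostSet (aggL π * A * avgL π) (redBound π d m) (redBound π d M)
            Fhat Rhat ((aggL π).mulVec x0) T) ∧
        sSup (costSet A B m M F R x0 T) =
          sSup (redCostSet (aggL π * A * avgL π) (redBound π d m) (redBound π d M)
            Fhat Rhat ((aggL π).mulVec x0) T)) :
    aggL π * A = aggL π * A * avgL π * aggL π := by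
  set Ahat := aggL π * A * avgL π
  have hvel : ∀ x₀ b, b ∈ Icc (redBound π d m) (redBound π d M) →
      Ahat *ᵥ (aggL π *ᵥ x₀) + b - (aggL π * A) *ᵥ x₀ ∈ Icc (redBound π d m) (redBound π d M) := by
    intro x₀ b hb
    obtain ⟨z, hzc, hzeq, hz₀⟩ := exists_continuous_eq_add_integral_const
      (mulVecLin Ahat).toContinuousLinearMap (aggL π *ᵥ x₀) b
    refine sub_mem_Icc_redBound_of_tracking hB (by simpa using hzeq 0) hz₀.hasDerivWithinAt
      fun T hT => exists_isAdmissiblePair_of_sSup_costSet_eq_one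
        (p := fun x => aggL π *ᵥ x = z T) ?_
    rw [(hval _ _ (fun w => if w = z T then 1 else 0) (fun _ _ _ => 0) (fun _ => rfl)
      (fun _ _ _ => rfl) x₀ T hT.le).2]
    exact (sSup_eq_one_iff_one_mem (redCostSet_ite_subset ..)).2 ⟨fun _ => b, z,
      measurable_const, fun _ i => ⟨hb.1 i, hb.2 i⟩, hzc, fun t _ => hzeq t,
      intervalIntegrable_const, by simp⟩
  have hbox : redBound π d m ≤ redBound π d M := fun i => Finset.sum_le_sum fun l _ => hmM l
  refine ext_iff_mulVec.2 fun x₀ => le_antisymm ?_ ?_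
  · have h := (hvel x₀ _ ⟨le_rfl, hbox⟩).1
    rwa [add_sub_right_comm, le_add_iff_nonneg_left, sub_nonneg, mulVec_mulVec] at h
  · have h := (hvel x₀ _ ⟨hbox, le_rfl⟩).2
    rwa [add_sub_right_comm, add_le_iff_nonpos_left, sub_nonpos, mulVec_mulVec] at h

/-- Theorem 2, converse direction: if for every pair of final and running costs that are
constant on the partition (with induced reduced costs) the optimal costs of the original
and reduced systems agree (both infima and suprema, for all initial states and horizons),
then the partition is a control equivalence for `A`. -/
theorem controlEquivalence_of_value_functions_preserved {N n K : ℕ} (π : Fin N → Fin n)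
    (hπ : Function.Surjective π) (A : Matrix (Fin N) (Fin N) ℝ)
    (d : Fin K → Fin N) (hd : Function.Injective d)
    (B : Matrix (Fin N) (Fin K) ℝ)
    (hB : ∀ (j : Fin N) (l : Fin K), B j l = if j = d l then 1 else 0)
    (m M : Fin K → ℝ) (hmM : ∀ l, m l ≤ M l)
    (hval : ∀ (F : (Fin N → ℝ) → ℝ) (R : ℝ → (Fin N → ℝ) → (Fin K → ℝ) → ℝ)
      (Fhat : (Fin n → ℝ) → ℝ) (Rhat : ℝ → (Fin n → ℝ) → (Fin n → ℝ) → ℝ),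
      (∀ x : Fin N → ℝ, F x = Fhat ((aggL π).mulVec x)) →
      (∀ (t : ℝ) (x : Fin N → ℝ) (v : Fin K → ℝ),
        R t x v = Rhat t ((aggL π).mulVec x) ((aggL π * B).mulVec v)) →
      ∀ (x0 : Fin N → ℝ) (T : ℝ), 0 ≤ T →
        sInf (costSet A B m M F R x0 T) =
          sInf (redCostSet (aggL π * A * avgL π) (redBound π d m) (redBound π d M)
            Fhat Rhat ((aggL π).mulVec x0) T) ∧
        sSup (costSet A B m M F R x0 T) =
          sSup (redCostSet (aggL π * A * avgL π) (redBound π d m) (redBound π d M)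
            Fhat Rhat ((aggL π).mulVec x0) T)) :
    aggL π * A = aggL π * A * avgL π * aggL π :=
  controlEquivalence_of_value_functions_preserved_general π A d B hB m M hmM hval
end

section
/- (Existence of the coarsest control equivalence refining a given partition; mathematical core of Theorem 3.) Let A ∈ ℝ^{N×N} and let r' be an equivalence relation on Fin N. Among all equivalence relations r on Fin N that refine r' (i.e., r-related elements are r'-related) and are control equivalences for A, there exists a greatest one: an equivalence relation r* refining r' that is a control equivalence for A and such that every control equivalence for A refining r' also refines r*. -/
open Matrix

open Classical in
/-- An equivalence relation `r` on `Fin N` is a control equivalence for `A` if, for every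
class `C` of `r` (the class of some node `c`) and all nodes `j, j'` lying in a common
class of `r`, the column sums of `A` over `C` agree. -/
noncomputable def IsCtrlEquiv {N : ℕ} (A : Matrix (Fin N) (Fin N) ℝ)
    (r : Setoid (Fin N)) : Prop :=
  ∀ j j' : Fin N, r.r j j' → ∀ c : Fin N,
    ∑ i ∈ Finset.univ.filter (fun i : Fin N => r.r i c), A i j =
      ∑ i ∈ Finset.univ.filter (fun i : Fin N => r.r i c), A i j'

/-!
Control equivalences are closed under arbitrary joins, so the coarsest one below `r'` is the
join of all of them. The join of a family of setoids is generated by their union; if `j`, `j'`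
are related by some control equivalence `r` in the family, then `r` refines the join `s`,
each `s`-class is a disjoint union of `r`-classes, and the column sums at `j` and `j'` agree
over every `r`-class, hence over every `s`-class.
-/

open Classical in
theorem Setoid.sum_class_eq_of_le {α M : Type*} [Fintype α] [AddCommMonoid M]
    {r s : Setoid α} (hle : r ≤ s) {f g : α → M}
    (h : ∀ c, ∑ i ∈ Finset.univ.filter (fun i => r.r i c), f i =
      ∑ i ∈ Finset.univ.filter (fun i => r.r i c), g i)
    (c : α) :
    ∑ i ∈ Finset.univ.filter (fun i => s.r i c), f i =
      ∑ i ∈ Finset.univ.filter (fun i => s.r i c), g i := by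
  set C := Finset.univ.filter (fun i => s.r i c)
  have fiber_eq : ∀ k ∈ C, C.filter (fun i => (⟦i⟧ : Quotient r) = ⟦k⟧) =
      Finset.univ.filter (fun i => r.r i k) := by
    intro k hk
    ext i
    simp only [C, Finset.mem_filter, Finset.mem_univ, true_and, Quotient.eq] at hk ⊢
    exact ⟨And.right, fun hik => ⟨s.trans (hle hik) hk, hik⟩⟩
  rw [Finset.sum_partition r, Finset.sum_partition r]
  refine Finset.sum_congr rfl fun q hq => ?_
  obtain ⟨k, hk, rfl⟩ := Finset.mem_image.mp hq
  rw [fiber_eq k hk]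
  exact h k

open Classical in
theorem IsCtrlEquiv.sum_class_eq_of_le {N : ℕ} {A : Matrix (Fin N) (Fin N) ℝ}
    {r s : Setoid (Fin N)} (hr : IsCtrlEquiv A r) (hle : r ≤ s) {j j' : Fin N}
    (hjj' : r.r j j') (c : Fin N) :
    ∑ i ∈ Finset.univ.filter (fun i => s.r i c), A i j =
      ∑ i ∈ Finset.univ.filter (fun i => s.r i c), A i j' :=
  Setoid.sum_class_eq_of_le hle (hr j j' hjj') c

theorem isCtrlEquiv_sSup {N : ℕ} {A : Matrix (Fin N) (Fin N) ℝ} {S : Set (Setoid (Fin N))}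
    (hS : ∀ r ∈ S, IsCtrlEquiv A r) : IsCtrlEquiv A (sSup S) := by
  intro j j' hjj' c
  rw [Setoid.sSup_eq_eqvGen] at hjj'
  induction hjj' with
  | rel x y hxy =>
    obtain ⟨r, hrS, hxy⟩ := hxy
    exact (hS r hrS).sum_class_eq_of_le (le_sSup hrS) hxy c
  | refl x => rfl
  | symm x y _ ih => exact ih.symm
  | trans x y z _ _ ih₁ ih₂ => exact ih₁.trans ih₂

/-- Existence of the coarsest control equivalence refining a given partition: among all
equivalence relations refining `r'` that are control equivalences for `A`, there is a
greatest one. -/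
theorem exists_coarsest_controlEquivalence {N : ℕ} (A : Matrix (Fin N) (Fin N) ℝ)
    (r' : Setoid (Fin N)) :
    ∃ rstar : Setoid (Fin N),
      (∀ a b : Fin N, rstar.r a b → r'.r a b) ∧
      IsCtrlEquiv A rstar ∧
      ∀ r : Setoid (Fin N), (∀ a b : Fin N, r.r a b → r'.r a b) →
        IsCtrlEquiv A r → ∀ a b : Fin N, r.r a b → rstar.r a b := by
  let S : Set (Setoid (Fin N)) := {r | r ≤ r' ∧ IsCtrlEquiv A r}
  have sSup_le_r' : sSup S ≤ r' := sSup_le fun r hr => hr.1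
  refine ⟨sSup S, fun a b hab => sSup_le_r' hab, isCtrlEquiv_sSup fun r hr => hr.2,
    fun r hle hr a b hab => ?_⟩
  exact le_sSup (show r ∈ S from ⟨fun a b hab => hle a b hab, hr⟩) hab
end
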